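/- (Moser–Jodeit one-dimensional lemma.) Let q ∈ (1, ∞) and q' = q/(q−1). Then A(q) = sup_φ ∫₀^∞ exp(φ(t)^{q'} − t) dt < ∞, where the supremum is taken over all nonnegative functions φ ∈ C¹[0, ∞) such that φ(0) = 0, φ' ≥ 0 on (0, ∞), and ∫₀^∞ (φ'(t))^q dt ≤ 1. -/

import Mathlib

open MeasureTheory Set Real
open scoped ENNReal

/-!
Let `G t = ∫₀ᵗ φ'^q` (`MoserJodeit.energy`), so `G ≤ 1`. Hölder on `[s, t]` gives
`φ t - φ s ≤ (G t - G s)^(1/q) (t - s)^(1/q')`; in particular `φ t ^ q' ≤ t`, so the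
integrand is `exp (-f)` with `f t = t - φ t ^ q' ≥ 0`. If `f a < r` with `a ≫ r`, then `G a` is
already close to `1`, so Hölder leaves `φ` almost no room to grow after `a`, and `f b < r`
forces `b - a ≲ r`. Hence `|{f < r}| ≲ r`, and the layer-cake formula bounds `∫ exp (-f)` by a
constant depending only on `q`.
-/

lemma mul_sub_le_rpow_mul_rpow_sub_rpow {α x y : ℝ} (hα₀ : 0 ≤ α) (hα₁ : α ≤ 1)
    (hx : 0 ≤ x) (hxy : x ≤ y) : α * (y - x) ≤ y ^ (1 - α) * (y ^ α - x ^ α) := by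
  rcases (hx.trans hxy).eq_or_lt with hy | hy
  · obtain rfl : x = 0 := le_antisymm (hy ▸ hxy) hx
    simp [← hy]
  have bernoulli := rpow_one_add_le_one_add_mul_self (s := x / y - 1)
    (by linarith [div_nonneg hx hy.le]) hα₀ hα₁
  rw [add_sub_cancel, div_rpow hx hy.le, div_le_iff₀ (rpow_pos_of_pos hy α)] at bernoulli
  have hy_eq : y ^ (1 - α) * y ^ α = y := by rw [← rpow_add hy, sub_add_cancel, rpow_one]
  have := mul_le_mul_of_nonneg_left bernoulli (rpow_nonneg hy.le (1 - α))
  rw [mul_left_comm, hy_eq] at this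
  calc α * (y - x) = y - y * (1 + α * (x / y - 1)) := by field_simp; ring
    _ ≤ y ^ (1 - α) * (y ^ α - x ^ α) := by rw [mul_sub (y ^ (1 - α)), hy_eq]; linarith

lemma one_sub_one_sub_rpow_le {p x : ℝ} (hp : 0 < p) (hx₀ : 0 ≤ x) (hx₁ : x ≤ 1) :
    1 - (1 - x) ^ p ≤ max 1 p * x := by
  rcases le_or_gt 1 p with hp1 | hp1
  · have := one_add_mul_self_le_rpow_one_add (s := -x) (by linarith) hp1
    rw [← sub_eq_add_neg] at this
    nlinarith [le_max_right 1 p]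
  · have := rpow_le_rpow_of_exponent_ge' (sub_nonneg.2 hx₁) (by linarith) hp.le hp1.le
    rw [rpow_one] at this
    nlinarith [le_max_left 1 p]

lemma min_le_of_rpow_add_sub_le {q q' c r t u : ℝ} (hqq' : q.HolderConjugate q') (hc : 0 ≤ c)
    (hr : 0 ≤ r) (ht : 0 < t) (hu : 2 * r ≤ u)
    (h : (t + u - r) ^ q'⁻¹ ≤ t ^ q'⁻¹ + u ^ q'⁻¹ * (c * r / t) ^ q⁻¹) :
    min t u ≤ 2 * c * (2 * q') ^ q * r := by
  have hq := hqq'.pos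
  have hq' := hqq'.symm.pos
  rcases (show 0 ≤ u by linarith).eq_or_lt with rfl | hu₀
  · rw [min_eq_right ht.le]; positivity
  set M := max t u
  have hM : 0 < M := lt_max_of_lt_left ht
  have hy : t ≤ t + u - r := by linarith
  have tangent := mul_sub_le_rpow_mul_rpow_sub_rpow (inv_nonneg.2 hq'.le)
    (inv_le_one_of_one_le₀ hqq'.symm.lt.le) ht.le hy
  rw [hqq'.symm.one_sub_inv] at tangent
  have hy₀ : 0 ≤ (t + u - r) ^ q⁻¹ := rpow_nonneg (by linarith) _
  have key : q'⁻¹ * (u / 2) ≤ u ^ q'⁻¹ * (2 * M * (c * r / t)) ^ q⁻¹ :=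
    calc q'⁻¹ * (u / 2) ≤ q'⁻¹ * (t + u - r - t) := by gcongr; linarith
      _ ≤ (t + u - r) ^ q⁻¹ * ((t + u - r) ^ q'⁻¹ - t ^ q'⁻¹) := tangent
      _ ≤ (t + u - r) ^ q⁻¹ * (u ^ q'⁻¹ * (c * r / t) ^ q⁻¹) :=
        mul_le_mul_of_nonneg_left (by linarith) hy₀
      _ = u ^ q'⁻¹ * ((t + u - r) * (c * r / t)) ^ q⁻¹ := by
        rw [mul_rpow (by linarith) (by positivity)]; ring
      _ ≤ u ^ q'⁻¹ * (2 * M * (c * r / t)) ^ q⁻¹ := by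
        have : t + u - r ≤ 2 * M := by linarith [le_max_left t u, le_max_right t u]
        gcongr
        exact mul_nonneg (by linarith) (by positivity)
  have hsplit : u ^ q'⁻¹ * u ^ q⁻¹ = u := by
    rw [← rpow_add hu₀, add_comm, hqq'.inv_add_inv_eq_one, rpow_one]
  have key' : (u / (2 * q') ^ q) ^ q⁻¹ ≤ (2 * M * (c * r / t)) ^ q⁻¹ := by
    rw [div_rpow hu₀.le (by positivity), rpow_rpow_inv (by positivity) hq.ne',
      div_le_iff₀ (by positivity)]
    refine le_of_mul_le_mul_left ?_ (rpow_pos_of_pos hu₀ q'⁻¹)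
    calc u ^ q'⁻¹ * u ^ q⁻¹ = 2 * q' * (q'⁻¹ * (u / 2)) := by rw [hsplit]; field_simp
      _ ≤ 2 * q' * (u ^ q'⁻¹ * (2 * M * (c * r / t)) ^ q⁻¹) := by gcongr
      _ = _ := by ring
  have hu_le := (rpow_le_rpow_iff (by positivity) (by positivity) (inv_pos.2 hq)).1 key'
  rw [div_le_iff₀ (by positivity)] at hu_le
  have htu : min t u * M ≤ 2 * c * (2 * q') ^ q * r * M :=
    calc min t u * M = t * u := min_mul_max t u
      _ ≤ t * (2 * M * (c * r / t) * (2 * q') ^ q) := by gcongr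
      _ = 2 * c * (2 * q') ^ q * r * M := by field_simp
  exact le_of_mul_le_mul_right htu hM

lemma volume_le_two_mul_of_forall_sub_le {S : Set ℝ} {L : ℝ} (hS : S ⊆ Ioi 0)
    (h : ∀ a ∈ S, ∀ b ∈ S, L < a → a ≤ b → b - a ≤ L) :
    volume S ≤ 2 * ENNReal.ofReal L := by
  have hcover : S ⊆ Ioc 0 L ∪ (S ∩ Ioi L) := fun x hx =>
    (le_or_gt x L).imp (fun hxL => ⟨hS hx, hxL⟩) fun hxL => ⟨hx, hxL⟩
  have hdiam : Metric.ediam (S ∩ Ioi L) ≤ ENNReal.ofReal L := by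
    refine Metric.ediam_le fun x hx y hy => ?_
    rw [edist_dist, Real.dist_eq]
    refine ENNReal.ofReal_le_ofReal (abs_sub_le_iff.2 ⟨?_, ?_⟩)
    all_goals rcases le_total x y with hxy | hxy
    all_goals first
      | linarith [h x hx.1 y hy.1 hx.2 hxy] | linarith [h y hy.1 x hx.1 hy.2 hxy]
  calc volume S ≤ volume (Ioc 0 L) + volume (S ∩ Ioi L) :=
        (measure_mono hcover).trans (measure_union_le _ _)
    _ ≤ ENNReal.ofReal L + ENNReal.ofReal L := by
        rw [Real.volume_Ioc, sub_zero]
        exact add_le_add le_rfl ((Real.volume_le_diam _).trans hdiam)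
    _ = 2 * ENNReal.ofReal L := (two_mul _).symm

lemma lintegral_Ioc_zero_one_neg_log :
    ∫⁻ s in Ioc (0 : ℝ) 1, ENNReal.ofReal (-log s) = 1 := by
  rw [← ofReal_integral_eq_lintegral_ofReal, integral_neg,
    ← intervalIntegral.integral_of_le zero_le_one, integral_log]
  · simp
  · exact ((intervalIntegrable_iff_integrableOn_Ioc_of_le zero_le_one).1
      intervalIntegral.intervalIntegrable_log').neg
  · exact ae_restrict_of_forall_mem measurableSet_Ioc fun s hs =>
      neg_nonneg.2 (log_nonpos hs.1.le hs.2)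

lemma lintegral_exp_neg_le {α : Type*} [MeasurableSpace α] {μ : Measure α} {f : α → ℝ}
    {K : ℝ} (hf : AEMeasurable f μ) (hf₀ : ∀ᵐ x ∂μ, 0 ≤ f x)
    (hK : ∀ r, 0 ≤ r → μ {x | f x < r} ≤ ENNReal.ofReal (K * r)) :
    ∫⁻ x, ENNReal.ofReal (exp (-f x)) ∂μ ≤ ENNReal.ofReal K := by
  rw [lintegral_eq_lintegral_meas_lt μ (f := fun x => exp (-f x))
    (ae_of_all _ fun x => (exp_pos _).le) (measurable_exp.comp_aemeasurable hf.neg)]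
  have hneg : μ {x | f x < 0} = 0 := by
    simpa only [not_le] using ae_iff.1 hf₀
  calc ∫⁻ s in Ioi 0, μ {x | s < exp (-f x)}
      ≤ ∫⁻ s in Ioi 0,
          (Ioc 0 1).indicator (fun s => ENNReal.ofReal K * ENNReal.ofReal (-log s)) s := by
        refine setLIntegral_mono' measurableSet_Ioi fun s (hs : 0 < s) => ?_
        rcases le_or_gt s 1 with hs₁ | hs₁
        · have hlog : 0 ≤ -log s := neg_nonneg.2 (log_nonpos hs.le hs₁)
          rw [indicator_of_mem (show s ∈ Ioc 0 1 from ⟨hs, hs₁⟩),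
            ← ENNReal.ofReal_mul' hlog]
          refine (measure_mono fun x hx => ?_).trans (hK _ hlog)
          have := (log_lt_iff_lt_exp hs).2 hx
          show f x < -log s
          linarith
        · refine (measure_mono_null (fun x (hx : s < exp (-f x)) => ?_) hneg).trans_le zero_le
          show f x < 0
          by_contra! hfx
          linarith [exp_le_one_iff.2 (neg_nonpos.2 hfx)]
    _ = ENNReal.ofReal K := by
        rw [lintegral_indicator measurableSet_Ioc, Measure.restrict_restrict measurableSet_Ioc,
          inter_eq_self_of_subset_left Ioc_subset_Ioi_self, lintegral_const_mul',
          lintegral_Ioc_zero_one_neg_log, mul_one]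
        exact ENNReal.ofReal_ne_top

section DerivIntegral

variable {q q' a s t : ℝ} {φ : ℝ → ℝ}

lemma integrableOn_deriv_Ioc (hφ : ContDiffOn ℝ 1 φ (Ici a)) (has : a ≤ s) :
    IntegrableOn (deriv φ) (Ioc s t) := by
  have hsub : Icc s t ⊆ Ici a := fun x hx => has.trans hx.1
  refine (((hφ.continuousOn_derivWithin (uniqueDiffOn_Ici a) le_rfl).mono hsub).integrableOn_Icc
    |>.mono_set Ioc_subset_Icc_self).congr_fun (fun x hx => ?_) measurableSet_Ioc
  exact derivWithin_of_mem_nhds (Ici_mem_nhds (has.trans_lt hx.1))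

lemma integral_Ioc_deriv (hφ : ContDiffOn ℝ 1 φ (Ici a)) (has : a ≤ s) (hst : s ≤ t) :
    ∫ x in Ioc s t, deriv φ x = φ t - φ s := by
  rw [← intervalIntegral.integral_of_le hst]
  refine intervalIntegral.integral_eq_sub_of_hasDerivAt_of_le hst
    (hφ.continuousOn.mono fun x hx => has.trans hx.1) (fun x hx => ?_)
    ((intervalIntegrable_iff_integrableOn_Ioc_of_le hst).2 (integrableOn_deriv_Ioc hφ has))
  have hx : a < x := has.trans_lt hx.1
  exact ((hφ.differentiableOn one_ne_zero x hx.le).differentiableAt (Ici_mem_nhds hx)).hasDerivAt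

lemma ofReal_sub_le_lintegral_deriv_rpow_mul (hqq' : q.HolderConjugate q')
    (hφ : ContDiffOn ℝ 1 φ (Ici a)) (hd : ∀ x ∈ Ioc s t, 0 ≤ deriv φ x) (has : a ≤ s)
    (hst : s ≤ t) :
    ENNReal.ofReal (φ t - φ s) ≤
      (∫⁻ x in Ioc s t, ENNReal.ofReal (deriv φ x ^ q)) ^ q⁻¹ *
        ENNReal.ofReal (t - s) ^ q'⁻¹ := by
  calc ENNReal.ofReal (φ t - φ s) = ∫⁻ x in Ioc s t, ENNReal.ofReal (deriv φ x) * 1 := by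
        rw [← integral_Ioc_deriv hφ has hst, ofReal_integral_eq_lintegral_ofReal
          (integrableOn_deriv_Ioc hφ has) (ae_restrict_of_forall_mem measurableSet_Ioc hd)]
        simp
    _ ≤ (∫⁻ x in Ioc s t, ENNReal.ofReal (deriv φ x) ^ q) ^ (1 / q) *
          (∫⁻ _ in Ioc s t, 1 ^ q') ^ (1 / q') :=
        ENNReal.lintegral_mul_le_Lp_mul_Lq _ hqq'
          (measurable_deriv φ).ennreal_ofReal.aemeasurable aemeasurable_const
    _ = _ := by
        rw [setLIntegral_congr_fun measurableSet_Ioc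
          fun x hx => ENNReal.ofReal_rpow_of_nonneg (hd x hx) hqq'.nonneg]
        simp [Real.volume_Ioc]

end DerivIntegral

namespace MoserJodeit

variable {q q' a s t : ℝ} {φ : ℝ → ℝ}

noncomputable def energy (q : ℝ) (φ : ℝ → ℝ) (t : ℝ) : ℝ :=
  (∫⁻ x in Ioc 0 t, ENNReal.ofReal (deriv φ x ^ q)).toReal

@[simp] lemma energy_zero : energy q φ 0 = 0 := by simp [energy]

lemma lintegral_Ioc_ne_top (hE : ∫⁻ x in Ioi 0, ENNReal.ofReal (deriv φ x ^ q) ≠ ∞)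
    (hs : 0 ≤ s) : ∫⁻ x in Ioc s t, ENNReal.ofReal (deriv φ x ^ q) ≠ ∞ :=
  ne_top_of_le_ne_top hE (lintegral_mono_set fun _ hx => hs.trans_lt hx.1)

lemma energy_mono (hE : ∫⁻ x in Ioi 0, ENNReal.ofReal (deriv φ x ^ q) ≠ ∞)
    (hst : s ≤ t) :
    energy q φ s ≤ energy q φ t :=
  ENNReal.toReal_mono (lintegral_Ioc_ne_top hE le_rfl)
    (lintegral_mono_set (Ioc_subset_Ioc_right hst))

lemma energy_le_one (hE : ∫⁻ x in Ioi 0, ENNReal.ofReal (deriv φ x ^ q) ≤ 1) :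
    energy q φ t ≤ 1 :=
  ENNReal.toReal_le_of_le_ofReal zero_le_one <| by
    simpa using (lintegral_mono_set Ioc_subset_Ioi_self).trans hE

lemma lintegral_Ioc_eq_ofReal_energy_sub
    (hE : ∫⁻ x in Ioi 0, ENNReal.ofReal (deriv φ x ^ q) ≠ ∞)
    (hs : 0 ≤ s) (hst : s ≤ t) :
    ∫⁻ x in Ioc s t, ENNReal.ofReal (deriv φ x ^ q) =
      ENNReal.ofReal (energy q φ t - energy q φ s) := by
  rw [energy, energy, ← Ioc_union_Ioc_eq_Ioc hs hst,
    lintegral_union measurableSet_Ioc (Ioc_disjoint_Ioc_of_le le_rfl),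
    ENNReal.toReal_add (lintegral_Ioc_ne_top hE le_rfl) (lintegral_Ioc_ne_top hE hs),
    add_sub_cancel_left, ENNReal.ofReal_toReal (lintegral_Ioc_ne_top hE hs)]

lemma sub_le_energy_sub_rpow_mul (hqq' : q.HolderConjugate q') (hφ : ContDiffOn ℝ 1 φ (Ici 0))
    (hd : ∀ x ∈ Ioi 0, 0 ≤ deriv φ x)
    (hE : ∫⁻ x in Ioi 0, ENNReal.ofReal (deriv φ x ^ q) ≠ ∞)
    (hs : 0 ≤ s) (hst : s ≤ t) :
    φ t - φ s ≤ (energy q φ t - energy q φ s) ^ q⁻¹ * (t - s) ^ q'⁻¹ := by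
  have hG : 0 ≤ energy q φ t - energy q φ s := sub_nonneg.2 (energy_mono hE hst)
  have := ofReal_sub_le_lintegral_deriv_rpow_mul hqq' hφ (fun x hx => hd x (hs.trans_lt hx.1))
    hs hst
  rw [lintegral_Ioc_eq_ofReal_energy_sub hE hs hst, ENNReal.ofReal_rpow_of_nonneg hG
    hqq'.inv_nonneg, ENNReal.ofReal_rpow_of_nonneg (sub_nonneg.2 hst) hqq'.symm.inv_nonneg,
    ← ENNReal.ofReal_mul (rpow_nonneg hG _)] at this
  exact (ENNReal.ofReal_le_ofReal_iff (by positivity)).1 this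

structure Admissible (q : ℝ) (φ : ℝ → ℝ) : Prop where
  contDiffOn : ContDiffOn ℝ 1 φ (Ici 0)
  nonneg : ∀ t ∈ Ici (0 : ℝ), 0 ≤ φ t
  map_zero : φ 0 = 0
  deriv_nonneg : ∀ t ∈ Ioi (0 : ℝ), 0 ≤ deriv φ t
  lintegral_le_one : ∫⁻ t in Ioi (0 : ℝ), ENNReal.ofReal (deriv φ t ^ q) ≤ 1

noncomputable def const (q q' : ℝ) : ℝ := 2 * max 1 (q - 1) * (2 * q') ^ q

lemma two_le_const (hqq' : q.HolderConjugate q') : 2 ≤ const q q' := by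
  have h₁ : 1 ≤ (2 * q') ^ q := one_le_rpow (by linarith [hqq'.symm.lt]) hqq'.nonneg
  have h₂ : 1 ≤ max 1 (q - 1) := le_max_left _ _
  unfold const
  nlinarith

namespace Admissible

lemma lintegral_ne_top (hφ : Admissible q φ) :
    ∫⁻ t in Ioi (0 : ℝ), ENNReal.ofReal (deriv φ t ^ q) ≠ ∞ :=
  ne_top_of_le_ne_top ENNReal.one_ne_top hφ.lintegral_le_one

lemma le_energy_rpow_mul (hφ : Admissible q φ) (hqq' : q.HolderConjugate q') (ht : 0 ≤ t) :
    φ t ≤ energy q φ t ^ q⁻¹ * t ^ q'⁻¹ := by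
  simpa [hφ.map_zero] using
    sub_le_energy_sub_rpow_mul hqq' hφ.contDiffOn hφ.deriv_nonneg hφ.lintegral_ne_top le_rfl ht

lemma le_rpow_inv (hφ : Admissible q φ) (hqq' : q.HolderConjugate q') (ht : 0 ≤ t) :
    φ t ≤ t ^ q'⁻¹ :=
  (hφ.le_energy_rpow_mul hqq' ht).trans <| mul_le_of_le_one_left (rpow_nonneg ht _) <|
    rpow_le_one ENNReal.toReal_nonneg (energy_le_one hφ.lintegral_le_one) hqq'.inv_nonneg

lemma rpow_le_self (hφ : Admissible q φ) (hqq' : q.HolderConjugate q') (ht : 0 ≤ t) :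
    φ t ^ q' ≤ t :=
  (le_rpow_inv_iff_of_pos (hφ.nonneg t ht) ht hqq'.symm.pos).1 (hφ.le_rpow_inv hqq' ht)

lemma one_sub_energy_le (hφ : Admissible q φ) (hqq' : q.HolderConjugate q') {r : ℝ}
    (hr : 0 ≤ r) (ha : 0 < a) (hra : r ≤ a) (hsub : a - φ a ^ q' < r) :
    1 - energy q φ a ≤ max 1 (q - 1) * r / a := by
  have hq := hqq'.pos
  have h₁ : (a - r) ^ q'⁻¹ ≤ energy q φ a ^ q⁻¹ * a ^ q'⁻¹ :=
    ((rpow_inv_le_iff_of_pos (by linarith) (hφ.nonneg a ha.le) hqq'.symm.pos).2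
      (by linarith)).trans (hφ.le_energy_rpow_mul hqq' ha.le)
  have hra' : r / a ≤ 1 := (div_le_one ha).2 hra
  have h₂ : ((1 - r / a) ^ (q - 1)) ^ q⁻¹ ≤ energy q φ a ^ q⁻¹ := by
    rwa [← rpow_mul (by linarith), ← div_eq_mul_inv, sub_div, div_self hq.ne',
      ← inv_eq_one_div, hqq'.one_sub_inv, one_sub_div ha.ne', div_rpow (by linarith) ha.le,
      div_le_iff₀ (by positivity)]
  have h₃ : (1 - r / a) ^ (q - 1) ≤ energy q φ a :=
    (rpow_le_rpow_iff (rpow_nonneg (by linarith) _) ENNReal.toReal_nonneg (inv_pos.2 hq)).1 h₂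
  have := one_sub_one_sub_rpow_le hqq'.sub_one_pos (div_nonneg hr ha.le) hra'
  rw [mul_div_assoc]
  linarith

lemma sub_le_const_mul (hφ : Admissible q φ) (hqq' : q.HolderConjugate q') {r b : ℝ}
    (hr : 0 ≤ r) (ha : 0 < a) (hab : a ≤ b) (hCa : const q q' * r < a)
    (ha_sub : a - φ a ^ q' < r) (hb_sub : b - φ b ^ q' < r) : b - a ≤ const q q' * r := by
  have h2C := mul_le_mul_of_nonneg_right (two_le_const hqq') hr
  rcases le_or_gt (b - a) (2 * r) with hsmall | hlarge
  · linarith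
  have hq' := hqq'.symm.pos
  have hgap : energy q φ b - energy q φ a ≤ max 1 (q - 1) * r / a := by
    linarith [energy_le_one (t := b) hφ.lintegral_le_one,
      hφ.one_sub_energy_le hqq' hr ha (by linarith) ha_sub]
  have hineq : (a + (b - a) - r) ^ q'⁻¹ ≤
      a ^ q'⁻¹ + (b - a) ^ q'⁻¹ * (max 1 (q - 1) * r / a) ^ q⁻¹ :=
    calc (a + (b - a) - r) ^ q'⁻¹ ≤ φ b := by
          rw [add_sub_cancel]
          exact (rpow_inv_le_iff_of_pos (by linarith) (hφ.nonneg b (ha.le.trans hab)) hq').2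
            (by linarith)
      _ ≤ φ a + (energy q φ b - energy q φ a) ^ q⁻¹ * (b - a) ^ q'⁻¹ := by
          linarith [sub_le_energy_sub_rpow_mul hqq' hφ.contDiffOn hφ.deriv_nonneg
            hφ.lintegral_ne_top ha.le hab]
      _ ≤ a ^ q'⁻¹ + (b - a) ^ q'⁻¹ * (max 1 (q - 1) * r / a) ^ q⁻¹ := by
          rw [mul_comm]
          exact add_le_add (hφ.le_rpow_inv hqq' ha.le) <| mul_le_mul_of_nonneg_left
            (rpow_le_rpow (sub_nonneg.2 (energy_mono hφ.lintegral_ne_top hab)) hgap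
              hqq'.inv_nonneg) (rpow_nonneg (by linarith) _)
  have hmin := min_le_of_rpow_add_sub_le hqq' (by positivity) hr ha hlarge.le hineq
  by_contra! hbC
  exact (lt_min hCa hbC).not_ge hmin

lemma volume_setOf_sub_rpow_lt_le (hφ : Admissible q φ) (hqq' : q.HolderConjugate q') {r : ℝ}
    (hr : 0 ≤ r) :
    volume.restrict (Ioi 0) {t | t - φ t ^ q' < r} ≤ ENNReal.ofReal (2 * const q q' * r) := by
  rw [Measure.restrict_apply' measurableSet_Ioi, mul_assoc, ENNReal.ofReal_mul zero_le_two,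
    ENNReal.ofReal_ofNat]
  exact volume_le_two_mul_of_forall_sub_le inter_subset_right
    fun a ha b hb hCa hab => hφ.sub_le_const_mul hqq' hr ha.2 hab hCa ha.1 hb.1

lemma lintegral_exp_le (hφ : Admissible q φ) (hqq' : q.HolderConjugate q') :
    ∫⁻ t in Ioi 0, ENNReal.ofReal (exp (φ t ^ q' - t)) ≤
      ENNReal.ofReal (2 * const q q') := by
  have hmeas : AEMeasurable (fun t => t - φ t ^ q') (volume.restrict (Ioi 0)) :=
    aemeasurable_id.sub (((hφ.contDiffOn.continuousOn.mono Ioi_subset_Ici_self).aemeasurable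
      measurableSet_Ioi).pow_const q')
  simpa only [neg_sub] using lintegral_exp_neg_le hmeas
    (ae_restrict_of_forall_mem measurableSet_Ioi fun t ht =>
      sub_nonneg.2 (hφ.rpow_le_self hqq' ht.le))
    fun r hr => hφ.volume_setOf_sub_rpow_lt_le hqq' hr

end Admissible
end MoserJodeit

/-- **Moser–Jodeit one-dimensional lemma.** For `q ∈ (1,∞)` and
`q' = q/(q−1)`, the supremum
`A(q) = sup_φ ∫₀^∞ exp(φ(t)^{q'} − t) dt` over all nonnegative `φ ∈ C¹[0,∞)` with
`φ(0) = 0`, `φ' ≥ 0` on `(0,∞)` and `∫₀^∞ (φ'(t))^q dt ≤ 1` is finite. -/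
theorem moser_jodeit_one_dimensional (q q' : ℝ) (hq : 1 < q) (hq' : q' = q / (q - 1)) :
    (⨆ φ ∈ {φ : ℝ → ℝ |
        ContDiffOn ℝ 1 φ (Ici (0 : ℝ)) ∧
        (∀ t ∈ Ici (0 : ℝ), 0 ≤ φ t) ∧
        φ 0 = 0 ∧
        (∀ t ∈ Ioi (0 : ℝ), 0 ≤ deriv φ t) ∧
        (∫⁻ t in Ioi (0 : ℝ), ENNReal.ofReal (deriv φ t ^ q)) ≤ 1},
      ∫⁻ t in Ioi (0 : ℝ), ENNReal.ofReal (Real.exp (φ t ^ q' - t))) < ⊤ := by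
  have hqq' : q.HolderConjugate q' := (holderConjugate_iff_eq_conjExponent hq).2 hq'
  refine (iSup₂_le fun φ hφ => ?_).trans_lt
    (ENNReal.ofReal_lt_top (r := 2 * MoserJodeit.const q q'))
  obtain ⟨hcont, hnonneg, hzero, hderiv, hlintegral⟩ := hφ
  exact MoserJodeit.Admissible.lintegral_exp_le ⟨hcont, hnonneg, hzero, hderiv, hlintegral⟩ hqq'
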